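/- arXiv:1703.01993 — 2 statements merged into one kernel-verified Lean document; each statement's English description precedes it below -/
import Mathlib

section
/- The map σ from the set Z of Z-reduced forms to the set B₁ of binary strings containing at least one '1' is surjective. The map τ ∘ sb⁻¹ is a section of σ (i.e., σ(τ(sb⁻¹(s))) = s for every s in B₁), and its image is exactly the set of Z-reduced forms whose discriminant has the form k²+4 or k²−4 for some integer k. -/
/-- A binary quadratic form `A x² + B x y + C y²` with integer coefficients. -/
structure QF where
  a : ℤ
  b : ℤ
  c : ℤ

/-- The discriminant `B² - 4AC` of a form. -/
def QF.disc (f : QF) : ℤ := f.b ^ 2 - 4 * f.a * f.c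

/-- The action of a matrix `[[α, β], [γ, δ]]` on a form:
`f(x,y) ↦ f(αx + βy, γx + δy)`. -/
def QF.transform (f : QF) (α β γ δ : ℤ) : QF :=
  ⟨f.a * α ^ 2 + f.b * α * γ + f.c * γ ^ 2,
   2 * f.a * α * β + f.b * (α * δ + β * γ) + 2 * f.c * γ * δ,
   f.a * β ^ 2 + f.b * β * δ + f.c * δ ^ 2⟩

/-- A form is indefinite if its discriminant is positive and not a perfect square. -/
def QF.IsIndefinite (f : QF) : Prop := 0 < f.disc ∧ ¬ IsSquare f.disc

/-- An indefinite form `(A,B,C)` is Z-reduced if `A,B,C > 0` and `B > A + C`. -/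
def QF.IsZReduced (f : QF) : Prop :=
  f.IsIndefinite ∧ 0 < f.a ∧ 0 < f.b ∧ 0 < f.c ∧ f.a + f.c < f.b

/-- An indefinite form `(A,B,C)` is G-reduced if `AC < 0` and `B > |A + C|`. -/
def QF.IsGReduced (f : QF) : Prop :=
  f.IsIndefinite ∧ f.a * f.c < 0 ∧ |f.a + f.c| < f.b

/-- G-reduced with `A > 0`. -/
def QF.IsGPlus (f : QF) : Prop := f.IsGReduced ∧ 0 < f.a

/-- G-reduced with `A < 0`. -/
def QF.IsGMinus (f : QF) : Prop := f.IsGReduced ∧ f.a < 0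

/-- `(t, u)` is the fundamental solution of `|t² - Δ u²| = 4`:
a solution in positive integers with `u` minimal. -/
def IsFundSol (Δ t u : ℤ) : Prop :=
  0 < t ∧ 0 < u ∧ |t ^ 2 - Δ * u ^ 2| = 4 ∧
    ∀ t' u' : ℤ, 0 < t' → 0 < u' → |t' ^ 2 - Δ * u' ^ 2| = 4 → u ≤ u'

/-- The continuant of a finite sequence of integers. -/
def cont : List ℤ → ℤ
  | [] => 1
  | [q] => q
  | q :: r :: t => q * cont (r :: t) + cont t

/-- `L` is the list of partial quotients of a regular continued fraction expansion of
the rational number `x`: all partial quotients are positive and the value of the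
continued fraction, namely `cont L / cont L.tail`, equals `x`. -/
def IsCF (x : ℚ) (L : List ℤ) : Prop :=
  L ≠ [] ∧ (∀ q ∈ L, 0 < q) ∧ (cont L : ℚ) = x * cont L.tail

/-- The bead sequence `β(f)` of a Z-reduced form `f = (A,B,C)` of discriminant `Δ`:
with `(t,u)` the fundamental solution of `|t² - Δu²| = 4` and `z = (t + Bu)/2`,
it is the continued fraction expansion of `z/(z - Au)` whose number of partial
quotients is even if `t² - Δu² = -4` and odd otherwise. -/
def QF.IsBeta (f : QF) (L : List ℤ) : Prop :=
  ∃ t u : ℤ, IsFundSol f.disc t u ∧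
    IsCF ((((t + f.b * u : ℤ) : ℚ) / 2) / ((((t + f.b * u : ℤ) : ℚ) / 2) - ((f.a * u : ℤ) : ℚ))) L ∧
    (t ^ 2 - f.disc * u ^ 2 = -4 → Even L.length) ∧
    (t ^ 2 - f.disc * u ^ 2 = 4 → Odd L.length)

/-- Dirichlet's map `γ(f)` for `f = (A,B,C)` in `G⁺` of discriminant `Δ`:
with `(t,u)` the fundamental solution of `|t² - Δu²| = 4` and `z = (t + Bu)/2`,
it is the continued fraction expansion of `z/(Au)` whose number of partial
quotients is odd if `t² - Δu² = -4` and even otherwise. -/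
def QF.IsGamma (f : QF) (L : List ℤ) : Prop :=
  ∃ t u : ℤ, IsFundSol f.disc t u ∧
    IsCF ((((t + f.b * u : ℤ) : ℚ) / 2) / ((f.a * u : ℤ) : ℚ)) L ∧
    (t ^ 2 - f.disc * u ^ 2 = -4 → Odd L.length) ∧
    (t ^ 2 - f.disc * u ^ 2 = 4 → Even L.length)

/-- The stars-and-bars map: `(q₁, …, q_l)` is sent to the binary string of length
`q₁ + ⋯ + q_l - 1` whose `j`-th character is `1` exactly at the partial sums
`q₁, q₁ + q₂, …, q₁ + ⋯ + q_{l-1}`. -/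
def sb : List ℤ → List Bool
  | [] => []
  | [q] => List.replicate (q - 1).toNat false
  | q :: r :: t => List.replicate (q - 1).toNat false ++ true :: sb (r :: t)

/-- `σ(f) = sb(β(f))`. -/
def QF.IsSigma (f : QF) (s : List Bool) : Prop :=
  ∃ L : List ℤ, f.IsBeta L ∧ s = sb L

/-- Zagier's reduction operator: `f ↦ f(nx + y, -x)` with `n = ⌈(B + √Δ)/(2A)⌉`. -/
noncomputable def RZ (f : QF) : QF :=
  f.transform ⌈((f.b : ℝ) + Real.sqrt (f.disc : ℝ)) / (2 * (f.a : ℝ))⌉ 1 (-1) 0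

/-- The number `δ` in Gauss's reduction operator: `|δ| = ⌊(B + √Δ)/(2|A|)⌋` with
`δ` having the sign of `A`. -/
noncomputable def gaussDelta (f : QF) : ℤ :=
  f.a.sign * ⌊((f.b : ℝ) + Real.sqrt (f.disc : ℝ)) / (2 * |(f.a : ℝ)|)⌋

/-- Gauss's reduction operator: `f ↦ f(δx + y, -x)`. -/
noncomputable def RG (f : QF) : QF := f.transform (gaussDelta f) 1 (-1) 0

/-- Add `1` to the last entry of a list. -/
def addLast : List ℤ → List ℤ
  | [] => []
  | [q] => [q + 1]
  | q :: r :: t => q :: addLast (r :: t)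

/-- Subtract `1` from the last entry of a list. -/
def subLast : List ℤ → List ℤ
  | [] => []
  | [q] => [q - 1]
  | q :: r :: t => q :: subLast (r :: t)

/-- Subtract `1` from the first entry of a list. -/
def decHead : List ℤ → List ℤ
  | [] => []
  | q :: t => (q - 1) :: t

/-- The operator `T_Z`: `(q₁,…,q_l) ↦ (q₁-1, q₂, …, q_{l-1}, q_l+1)` if `q₁ ≥ 2`;
`(q₂, q₁)` if `q₁ = 1` and `l = 2`; `(q₃, …, q_l, q₂, q₁)` if `q₁ = 1` and `l > 2`. -/
def TZ : List ℤ → List ℤ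
  | [] => []
  | [q] => [q]
  | q :: r :: s => if q = 1 then s ++ [r, 1] else (q - 1) :: addLast (r :: s)

/-- The map `μ` from G-reduced forms to Z-reduced forms. -/
def mu (f : QF) : QF :=
  if 0 < f.a then ⟨f.a, 2 * f.a + f.b, f.a + f.b + f.c⟩
  else ⟨f.a + f.b + f.c, f.b + 2 * f.c, f.c⟩

/-- The section `τ` of `β`: `τ((q₁,…,q_l)) = (A,B,C)` with `A = [q₁-1, q₂, …, q_l]`,
`C = [q₁, …, q_{l-1}, q_l - 1]`, `B = [q₁,…,q_l] + [q₁-1, q₂, …, q_{l-1}, q_l-1]`. -/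
def tau (L : List ℤ) : QF :=
  ⟨cont (decHead L), cont L + cont (subLast (decHead L)), cont (subLast L)⟩

/-- Multiply all coefficients of a form by `u`. -/
def QF.smul (u : ℤ) (f : QF) : QF := ⟨u * f.a, u * f.b, u * f.c⟩

/-- The reversal `(A,B,C)^R = (C,B,A)`. -/
def QF.rev (f : QF) : QF := ⟨f.c, f.b, f.a⟩

/-- The map `ρ((A,B,C)) = (-A, B, -C)`. -/
def rho (f : QF) : QF := ⟨-f.a, f.b, -f.c⟩

/-- A form is primitive if its coefficients have gcd 1. -/
def IsPrimitiveForm (f : QF) : Prop := Int.gcd f.a (Int.gcd f.b f.c) = 1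

/-- `SL₂(ℤ)`-equivalence of forms. -/
def FormEquiv (f g : QF) : Prop :=
  ∃ α β γ δ : ℤ, α * δ - β * γ = 1 ∧ g = f.transform α β γ δ

/-- A nonempty string is primitive if it differs from all of its nontrivial cyclic
shifts. -/
def PrimitiveList {α : Type*} (l : List α) : Prop :=
  l ≠ [] ∧ ∀ n, 0 < n → n < l.length → l.rotate n ≠ l

/-- The continuant `[q₂, …, q_{l-1}]` of the interior of a list, with the convention
that it is `0` for a list of length `≤ 1`. -/
def innerCont (L : List ℤ) : ℤ := if L.length ≤ 1 then 0 else cont (L.tail.dropLast)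

/-- The section `ξ` of `γ`: `ξ((q₁,…,q_l)) = (A,B,C)` with `A = [q₂,…,q_l]`,
`B = [q₁,…,q_l] - [q₂,…,q_{l-1}]`, `C = -[q₁,…,q_{l-1}]`. -/
def xiForm (L : List ℤ) : QF := ⟨cont L.tail, cont L - innerCont L, -(cont L.dropLast)⟩

/-- `p` is the minimal period of the purely periodic sequence `d`. -/
def IsMinPeriod {α : Type*} [Inhabited α] (d : ℕ → α) (p : List α) : Prop :=
  p ≠ [] ∧ (∀ n, d n = p.getD (n % p.length) default) ∧
    ∀ m, 0 < m → (∀ n, d (n + m) = d n) → p.length ≤ m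

/-- `d` is the sequence of partial quotients of the Denjoy continued fraction of `x`
(`true` = quotient 1, `false` = quotient 0): `ξ₀ = x`, `qₙ = 0` if `ξ_{n-1} < 1`,
`qₙ = 1` if `ξ_{n-1} > 1`, and `ξₙ = 1/(ξ_{n-1} - qₙ)`. -/
def IsDenjoySeq (x : ℝ) (d : ℕ → Bool) : Prop :=
  ∃ ξ : ℕ → ℝ, ξ 0 = x ∧
    ∀ n, ((ξ n < 1 ∧ d n = false) ∨ (1 < ξ n ∧ d n = true)) ∧
      ξ (n + 1) = 1 / (ξ n - if d n then 1 else 0)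

/-- `a` is the sequence of partial quotients of the regular continued fraction of `x`. -/
def IsRegCFSeq (x : ℝ) (a : ℕ → ℤ) : Prop :=
  ∃ ξ : ℕ → ℝ, ξ 0 = x ∧ ∀ n, a n = ⌊ξ n⌋ ∧ ξ (n + 1) = 1 / (ξ n - (a n : ℝ))

/-- Regular-to-Denjoy conversion: each partial quotient `q` becomes the string
`1 0 1 0 ⋯ 0 1` of `q` ones alternating with `q - 1` zeroes. -/
def regToDen (L : List ℤ) : List Bool :=
  (L.map fun q => true :: (List.replicate (q - 1).toNat [false, true]).flatten).flatten

/-- Replace each character `0` by the two characters `01`. -/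
def expand01 (s : List Bool) : List Bool :=
  (s.map fun b => if b then [true] else [false, true]).flatten

/-- A quadratic irrational. -/
def IsQuadIrrational (x : ℝ) : Prop :=
  Irrational x ∧ ∃ a b c : ℤ, a ≠ 0 ∧ (a : ℝ) * x ^ 2 + (b : ℝ) * x + (c : ℝ) = 0

/-!
For a positive list `L` of length `l ≥ 2` put `K = [L]`, `K₁ = [L.tail]`, `K₂ = [L.dropLast]`,
`K₃ = [L.tail.dropLast]`; these satisfy `K K₃ - K₁ K₂ = (-1)^l`. Then
`tau L = (K - K₁, 2K - t, K - K₂)` with `t = K₁ + K₂ - K₃`, and its discriminant is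
`t² + 4(-1)^l`. Hence `(t, 1)` is the fundamental solution, `z = K` and `z - Au = K₁`, so the
bead sequence of `tau L` is `L` itself; as every string containing a `1` is `sb L` for such an
`L`, `σ` is onto.

Conversely, let `(A, B, C)` be Z-reduced of discriminant `t² - 4e` with `e = ±1`. Then
`z = (t + B)/2` is an integer root of `z² - Bz + AC - e`, which says that the matrix
`[[z, z - C], [z - A, B - A - C]]` has determinant `-e`, and `z > A, C`. The Euclidean algorithm
expands `z/(z - A)` as a continued fraction `L` with `(-1)^l = -e`; its continuant matrix
`[[K, K₂], [K₁, K₃]]` shares the first column and the determinant, which forces the second column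
to agree as well, and then `tau L = (A, B, C)`.
-/

theorem cont_cons {M : List ℤ} (hM : M ≠ []) (q : ℤ) :
    cont (q :: M) = q * cont M + cont M.tail := by
  obtain ⟨r, t, rfl⟩ := List.exists_cons_of_ne_nil hM
  rfl

theorem one_le_cont : ∀ {L : List ℤ}, (∀ q ∈ L, 0 < q) → 1 ≤ cont L
  | [], _ => le_rfl
  | [q], hpos => hpos q (by simp)
  | q :: r :: t, hpos => by
    have hq := hpos q (by simp)
    have hrt := one_le_cont (L := r :: t) fun x hx => hpos x (by simp_all)
    have ht := one_le_cont (L := t) fun x hx => hpos x (by simp_all)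
    rw [cont]
    nlinarith

theorem cont_tail_lt : ∀ {L : List ℤ}, (∀ q ∈ L, 0 < q) → 2 ≤ L.length → cont L.tail < cont L
  | q :: r :: t, hpos, _ => by
    have hq := hpos q (by simp)
    have hrt := one_le_cont (L := r :: t) fun x hx => hpos x (by simp_all)
    have ht := one_le_cont (L := t) fun x hx => hpos x (by simp_all)
    rw [List.tail_cons, cont]
    nlinarith

theorem cont_append_singleton : ∀ {D : List ℤ}, D ≠ [] → ∀ a : ℤ,
    cont (D ++ [a]) = a * cont D + cont D.dropLast
  | [q], _, a => by simp only [List.cons_append, List.nil_append, cont, List.dropLast]; ring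
  | [q, r], _, a => by simp only [List.cons_append, List.nil_append, cont, List.dropLast]; ring
  | q :: r :: s :: t, _, a => by
    have h1 := cont_append_singleton (D := r :: s :: t) (by simp) a
    have h2 := cont_append_singleton (D := s :: t) (by simp) a
    simp only [List.cons_append, List.dropLast_cons_cons, cont] at h1 h2 ⊢
    linear_combination q * h1 + h2

theorem cont_dropLast_lt {L : List ℤ} (hpos : ∀ q ∈ L, 0 < q) (hL : 2 ≤ L.length) :
    cont L.dropLast < cont L := by
  have hne : L ≠ [] := List.ne_nil_of_length_pos (by omega)
  have hD : L.dropLast ≠ [] := List.ne_nil_of_length_pos (by simp; omega)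
  have ha := hpos _ (List.getLast_mem hne)
  have h1 := one_le_cont fun x hx => hpos x (List.mem_of_mem_dropLast hx)
  have h2 := one_le_cont fun x hx =>
    hpos x (List.mem_of_mem_dropLast (List.mem_of_mem_dropLast hx))
  conv_rhs => rw [← List.dropLast_append_getLast hne, cont_append_singleton hD]
  nlinarith

theorem cont_dropLast_le : ∀ {L : List ℤ}, (∀ q ∈ L, 0 < q) → cont L.dropLast ≤ cont L
  | [], _ => le_rfl
  | [q], hpos => hpos q (by simp)
  | _ :: _ :: _, hpos => (cont_dropLast_lt hpos (by simp)).le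

theorem cont_decHead {L : List ℤ} (hL : L ≠ []) : cont (decHead L) = cont L - cont L.tail := by
  obtain ⟨q, M, rfl⟩ := List.exists_cons_of_ne_nil hL
  rcases eq_or_ne M [] with rfl | hM
  · simp [decHead, cont]
  · rw [decHead, cont_cons hM, cont_cons hM, List.tail_cons]
    ring

theorem cont_subLast : ∀ {L : List ℤ}, L ≠ [] → cont (subLast L) = cont L - cont L.dropLast
  | [q], _ => by simp [subLast, cont]
  | [q, r], _ => by simp only [subLast, cont, List.dropLast]; ring
  | q :: r :: s :: t, _ => by
    have h1 := cont_subLast (L := r :: s :: t) (by simp)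
    have h2 := cont_subLast (L := s :: t) (by simp)
    simp only [subLast, cont, List.dropLast_cons_cons] at h1 h2 ⊢
    linear_combination q * h1 + h2

theorem cont_mul_sub_cont_mul : ∀ {L : List ℤ}, 2 ≤ L.length →
    cont L * cont L.tail.dropLast - cont L.tail * cont L.dropLast = (-1) ^ L.length
  | [q, r], _ => by simp only [cont, List.tail, List.dropLast, List.length]; ring
  | q :: r :: s :: t, _ => by
    have ih := cont_mul_sub_cont_mul (L := r :: s :: t) (by simp)
    simp only [List.tail_cons, List.dropLast_cons_cons, cont, List.length_cons] at ih ⊢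
    linear_combination (-1) * ih

theorem not_isSquare_sq_add_four {k : ℤ} (hk : 0 < k) : ¬ IsSquare (k ^ 2 + 4) := by
  rintro ⟨m, hm⟩
  rw [← abs_mul_abs_self m] at hm
  have h1 : k < |m| := by nlinarith [abs_nonneg m]
  have h2 : |m| < k + 2 := by nlinarith [abs_nonneg m]
  rw [show |m| = k + 1 by omega] at hm
  have : 2 * k = 3 := by linarith
  omega

theorem not_isSquare_sq_sub_four {k : ℤ} (hk : 2 < k) : ¬ IsSquare (k ^ 2 - 4) := by
  rintro ⟨m, hm⟩
  rw [← abs_mul_abs_self m] at hm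
  have h1 : |m| < k := by nlinarith [abs_nonneg m]
  have h2 : k - 2 < |m| := by nlinarith [abs_nonneg m]
  rw [show |m| = k - 1 by omega] at hm
  have : 2 * k = 5 := by linarith
  omega

def tauT (L : List ℤ) : ℤ := cont L.tail + cont L.dropLast - cont L.tail.dropLast

theorem tau_eq : ∀ {L : List ℤ}, 2 ≤ L.length →
    tau L = ⟨cont L - cont L.tail, 2 * cont L - tauT L, cont L - cont L.dropLast⟩
  | q :: r :: t, _ => by
    have hB : cont (subLast (decHead (q :: r :: t))) =
        cont (subLast (q :: r :: t)) - cont (subLast (r :: t)) :=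
      cont_decHead (L := q :: subLast (r :: t)) (by simp)
    rw [tau, QF.mk.injEq, hB, cont_decHead (by simp), cont_subLast (by simp),
      cont_subLast (by simp), tauT]
    exact ⟨rfl, by simp only [List.tail_cons]; ring, rfl⟩

theorem tau_disc {L : List ℤ} (hL : 2 ≤ L.length) :
    (tau L).disc = tauT L ^ 2 + 4 * (-1) ^ L.length := by
  rw [QF.disc, tau_eq hL, ← cont_mul_sub_cont_mul hL, tauT]
  ring

theorem tauT_pos {L : List ℤ} (hpos : ∀ q ∈ L, 0 < q) : 0 < tauT L := by
  have htail : ∀ q ∈ L.tail, 0 < q := fun x hx => hpos x (List.mem_of_mem_tail hx)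
  have h1 := cont_dropLast_le htail
  have h2 := one_le_cont fun x hx => hpos x (List.mem_of_mem_dropLast hx)
  rw [tauT]
  omega

theorem two_lt_tauT {L : List ℤ} (hpos : ∀ q ∈ L, 0 < q) (hL : 3 ≤ L.length) : 2 < tauT L := by
  have htail : ∀ q ∈ L.tail, 0 < q := fun x hx => hpos x (List.mem_of_mem_tail hx)
  have h1 := cont_dropLast_lt htail (by simp; omega)
  have h2 := cont_tail_lt (fun x hx => hpos x (List.mem_of_mem_dropLast hx)) (by simp; omega)
  have h3 := one_le_cont fun x hx => htail x (List.mem_of_mem_dropLast hx)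
  rw [List.tail_dropLast] at h2
  rw [tauT]
  omega

theorem tau_isZReduced {L : List ℤ} (hpos : ∀ q ∈ L, 0 < q) (hL : 2 ≤ L.length) :
    (tau L).IsZReduced := by
  have hk := tauT_pos hpos
  have hdisc : (tau L).IsIndefinite := by
    rw [QF.IsIndefinite, tau_disc hL]
    rcases L.length.even_or_odd with he | ho
    · rw [he.neg_one_pow, mul_one]
      exact ⟨by positivity, not_isSquare_sq_add_four hk⟩
    · have hk3 := two_lt_tauT hpos (by obtain ⟨m, hm⟩ := ho; omega)
      rw [ho.neg_one_pow, mul_neg_one, ← sub_eq_add_neg]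
      exact ⟨by nlinarith, not_isSquare_sq_sub_four hk3⟩
  have h1 := cont_tail_lt hpos hL
  have h2 := cont_dropLast_lt hpos hL
  have h3 := one_le_cont fun x hx => hpos x (List.mem_of_mem_tail (List.mem_of_mem_dropLast hx))
  refine ⟨hdisc, ?_⟩
  rw [tau_eq hL, tauT]
  dsimp only
  omega

theorem isFundSol_tauT {L : List ℤ} (hpos : ∀ q ∈ L, 0 < q) (hL : 2 ≤ L.length) :
    IsFundSol (tau L).disc (tauT L) 1 := by
  refine ⟨tauT_pos hpos, one_pos, ?_, fun _ _ _ hu _ => hu⟩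
  rw [tau_disc hL]
  rcases neg_one_pow_eq_or ℤ L.length with h | h <;> simp [h]

theorem tau_isBeta {L : List ℤ} (hpos : ∀ q ∈ L, 0 < q) (hL : 2 ≤ L.length) :
    (tau L).IsBeta L := by
  have hK1 : (cont L.tail : ℚ) ≠ 0 := by
    have := one_le_cont fun x hx => hpos x (List.mem_of_mem_tail hx)
    exact_mod_cast (by omega : cont L.tail ≠ 0)
  have hz : ((tauT L + (tau L).b * 1 : ℤ) : ℚ) / 2 = cont L := by
    rw [tau_eq hL]; push_cast; ring
  have hAu : (((tau L).a * 1 : ℤ) : ℚ) = cont L - cont L.tail := by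
    rw [tau_eq hL]; push_cast; ring
  have hnorm : tauT L ^ 2 - (tau L).disc * 1 ^ 2 = -4 * (-1) ^ L.length := by
    rw [tau_disc hL]; ring
  refine ⟨tauT L, 1, isFundSol_tauT hpos hL, ⟨List.ne_nil_of_length_pos (by omega), hpos, ?_⟩,
    fun h => ?_, fun h => ?_⟩
  · rw [hz, hAu, sub_sub_cancel, div_mul_cancel₀ _ hK1]
  · exact (neg_one_pow_eq_one_iff_even (R := ℤ) (by decide)).1 (by linarith)
  · exact (neg_one_pow_eq_neg_one_iff_odd (R := ℤ) (by decide)).1 (by linarith)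

theorem exists_cont_eq {p q ε : ℤ} (hq : 1 ≤ q) (hqp : q < p) (hco : IsCoprime p q)
    (hε : ε = 1 ∨ ε = -1) :
    ∃ L : List ℤ, (∀ x ∈ L, 0 < x) ∧ cont L = p ∧ cont L.tail = q ∧ (-1) ^ L.length = ε := by
  rcases eq_or_lt_of_le hq with rfl | hq2
  · rcases hε with rfl | rfl
    · exact ⟨[p - 1, 1], by simp; omega, by simp [cont], rfl, by norm_num⟩
    · exact ⟨[p], by simp; omega, rfl, rfl, by norm_num⟩
  have hr : 1 ≤ p % q := by
    rcases (Int.emod_nonneg p (by omega : q ≠ 0)).eq_or_lt with h0 | h0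
    · have := Int.isUnit_iff.1 (hco.isUnit_of_dvd' (Int.dvd_of_emod_eq_zero h0.symm) dvd_rfl)
      omega
    · omega
  have hdiv : 1 ≤ p / q := (Int.le_ediv_iff_mul_le (by omega)).2 (by omega)
  have hco' : IsCoprime q (p % q) := by
    rw [Int.emod_def, sub_eq_add_neg, ← mul_neg]
    exact hco.symm.add_mul_left_right _
  have hrq : p % q < q := Int.emod_lt_of_pos p (by omega)
  obtain ⟨L, hpos, hL, hLt, hLlen⟩ := exists_cont_eq hr hrq hco' (ε := -ε) (by omega)
  have hne : L ≠ [] := by rintro rfl; simp [cont] at hL; omega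
  refine ⟨p / q :: L, ?_, ?_, hL, ?_⟩
  · exact List.forall_mem_cons.2 ⟨by omega, hpos⟩
  · rw [cont_cons hne, hL, hLt]
    exact Int.ediv_mul_add_emod p q
  · rw [List.length_cons, pow_succ, hLlen]
    ring
termination_by q.toNat
decreasing_by omega

theorem exists_cont_matrix_eq {p q p' q' ε : ℤ} (hε : ε = 1 ∨ ε = -1)
    (hdet : p * q' - q * p' = ε) (hq : 1 ≤ q) (hqp : q < p) (hp' : 1 ≤ p') (hp'p : p' < p)
    (hq' : 1 ≤ q') :
    ∃ L : List ℤ, 2 ≤ L.length ∧ (∀ x ∈ L, 0 < x) ∧ cont L = p ∧ cont L.tail = q ∧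
      cont L.dropLast = p' ∧ cont L.tail.dropLast = q' := by
  have hε2 : ε * ε = 1 := by rcases hε with rfl | rfl <;> norm_num
  have hco : IsCoprime p q := ⟨ε * q', -(ε * p'), by linear_combination ε * hdet + hε2⟩
  obtain ⟨L, hpos, hp, hq, hlen⟩ := exists_cont_eq hq hqp hco hε
  rcases L with _ | ⟨x, _ | ⟨y, t⟩⟩
  · simp [cont] at hp; omega
  · simp only [List.tail_cons, cont, List.length_singleton, pow_one] at hq hlen
    subst hq hlen
    nlinarith
  set L := x :: y :: t
  have hL : 2 ≤ L.length := by simp [L]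
  have hdet' := cont_mul_sub_cont_mul hL
  rw [hp, hq, hlen] at hdet'
  have hK2 := cont_dropLast_lt hpos hL
  have hK2' := one_le_cont fun x hx => hpos x (List.mem_of_mem_dropLast hx)
  -- both second columns solve `p y - q x = ε`, so they agree modulo `p` and hence outright
  have hdvd : p ∣ q * (p' - cont L.dropLast) :=
    ⟨q' - cont L.tail.dropLast, by linear_combination hdet' - hdet⟩
  have hp'eq : p' - cont L.dropLast = 0 :=
    Int.eq_zero_of_abs_lt_dvd (hco.dvd_of_dvd_mul_left hdvd) (by rw [abs_lt]; omega)
  have hq'eq : p * (q' - cont L.tail.dropLast) = 0 := by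
    linear_combination hdet - hdet' + q * hp'eq
  refine ⟨L, hL, hpos, hp, hq, by omega, ?_⟩
  rcases mul_eq_zero.1 hq'eq with h | h <;> omega

theorem lt_larger_root {A B C t e z : ℤ} (hA : 0 < A) (hC : 0 < C) (hB : A + C < B) (ht : 0 < t)
    (he : e = 1 ∨ e = -1) (hdisc : B ^ 2 - 4 * A * C = t ^ 2 - 4 * e) (hz : 2 * z = t + B) :
    C < z := by
  by_contra! hzC
  have h1 : t ^ 2 ≤ (C - A - 1) ^ 2 := by nlinarith
  have h2 : (A + C + 1) ^ 2 ≤ B ^ 2 := by nlinarith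
  rcases he with rfl | rfl <;> nlinarith

theorem exists_tau_eq_mk {A B C t e : ℤ} (hA : 0 < A) (hC : 0 < C) (hB : A + C < B)
    (ht : 0 < t) (he : e = 1 ∨ e = -1) (hdisc : B ^ 2 - 4 * A * C = t ^ 2 - 4 * e) :
    ∃ L : List ℤ, 2 ≤ L.length ∧ (∀ q ∈ L, 0 < q) ∧ tau L = ⟨A, B, C⟩ := by
  have hpar : Even (t + B) := by
    have : Even (t ^ 2 + B ^ 2) := ⟨B ^ 2 + 2 * (e - A * C), by linear_combination -hdisc⟩
    rwa [Int.even_add, Int.even_pow' two_ne_zero, Int.even_pow' two_ne_zero, ← Int.even_add]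
      at this
  obtain ⟨z, hz⟩ := hpar
  have hz2 : 2 * z = t + B := by omega
  have hzC := lt_larger_root hA hC hB ht he hdisc hz2
  have hzA := lt_larger_root hC hA (by omega) ht he (by linear_combination hdisc) hz2
  have hdet : z * (B - A - C) - (z - A) * (z - C) = -e := by
    have : 4 * (z * (B - A - C) - (z - A) * (z - C)) = 4 * -e := by
      linear_combination (B - t - 2 * z) * hz2 + hdisc
    omega
  obtain ⟨L, hL, hpos, hK, hK1, hK2, hK3⟩ :=
    exists_cont_matrix_eq (by omega) hdet (by omega) (by omega) (by omega) (by omega) (by omega)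
  refine ⟨L, hL, hpos, ?_⟩
  rw [tau_eq hL, tauT, hK, hK1, hK2, hK3]
  congr 1 <;> ring

theorem exists_tau_eq {f : QF} (hf : f.IsZReduced)
    (hk : ∃ k : ℤ, f.disc = k ^ 2 + 4 ∨ f.disc = k ^ 2 - 4) :
    ∃ L : List ℤ, 2 ≤ L.length ∧ (∀ q ∈ L, 0 < q) ∧ tau L = f := by
  obtain ⟨A, B, C⟩ := f
  obtain ⟨⟨hΔ, hnsq⟩, hA, -, hC, hB⟩ := hf
  obtain ⟨k, hk⟩ := hk
  have hk0 : k ≠ 0 := by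
    rintro rfl
    rcases hk with h | h
    · exact hnsq ⟨2, by rw [h]; norm_num⟩
    · rw [h] at hΔ; norm_num at hΔ
  obtain ⟨e, he, hdisc⟩ : ∃ e : ℤ, (e = 1 ∨ e = -1) ∧ B ^ 2 - 4 * A * C = |k| ^ 2 - 4 * e := by
    rw [sq_abs]
    rcases hk with h | h
    exacts [⟨-1, .inr rfl, by rw [QF.disc] at h; linear_combination h⟩,
      ⟨1, .inl rfl, by rw [QF.disc] at h; linear_combination h⟩]
  exact exists_tau_eq_mk hA hC hB (abs_pos.2 hk0) he hdisc

theorem sb_one_cons {M : List ℤ} (hM : M ≠ []) : sb (1 :: M) = true :: sb M := by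
  obtain ⟨r, t, rfl⟩ := List.exists_cons_of_ne_nil hM
  simp [sb]

theorem sb_add_one_cons {q : ℤ} (hq : 1 ≤ q) (M : List ℤ) :
    sb ((q + 1) :: M) = false :: sb (q :: M) := by
  have hn : (q + 1 - 1).toNat = (q - 1).toNat + 1 := by omega
  cases M <;> simp only [sb, hn, List.replicate_succ, List.cons_append]

theorem exists_sb_eq : ∀ s : List Bool,
    ∃ L : List ℤ, (∀ q ∈ L, 0 < q) ∧ L.length = s.count true + 1 ∧ sb L = s
  | [] => ⟨[1], by simp, rfl, rfl⟩
  | b :: s => by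
    obtain ⟨L, hpos, hlen, rfl⟩ := exists_sb_eq s
    have hne : L ≠ [] := List.ne_nil_of_length_pos (by omega)
    obtain ⟨q, M, rfl⟩ := List.exists_cons_of_ne_nil hne
    have hq := hpos q (by simp)
    cases b
    · refine ⟨(q + 1) :: M, ?_, by simpa using hlen, sb_add_one_cons hq M⟩
      exact List.forall_mem_cons.2 ⟨by omega, fun x hx => hpos x (by simp [hx])⟩
    · exact ⟨1 :: q :: M, List.forall_mem_cons.2 ⟨one_pos, hpos⟩, by simpa using hlen,
        sb_one_cons (by simp)⟩

/-- **Corollary.** `σ : Z → B₁` is surjective; `τ ∘ sb⁻¹` is a section of `σ`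
whose image is the set of Z-reduced forms of discriminant `k² ± 4`. -/
theorem stmt5 :
    (∀ s : List Bool, true ∈ s → ∃ f : QF, f.IsZReduced ∧ f.IsSigma s) ∧
    (∀ L : List ℤ, 2 ≤ L.length → (∀ q ∈ L, 0 < q) →
      (tau L).IsZReduced ∧ (tau L).IsSigma (sb L) ∧
      (∃ k : ℤ, (tau L).disc = k ^ 2 + 4 ∨ (tau L).disc = k ^ 2 - 4)) ∧
    (∀ f : QF, f.IsZReduced →
      (∃ k : ℤ, f.disc = k ^ 2 + 4 ∨ f.disc = k ^ 2 - 4) →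
      ∃ L : List ℤ, 2 ≤ L.length ∧ (∀ q ∈ L, 0 < q) ∧ tau L = f) := by
  refine ⟨fun s hs => ?_, fun L hL hpos => ?_, fun f hf hk => exists_tau_eq hf hk⟩
  · obtain ⟨L, hpos, hlen, rfl⟩ := exists_sb_eq s
    have hL : 2 ≤ L.length := by have := List.count_pos_iff.2 hs; omega
    exact ⟨tau L, tau_isZReduced hpos hL, L, tau_isBeta hpos hL, rfl⟩
  · refine ⟨tau_isZReduced hpos hL, ⟨L, tau_isBeta hpos hL, rfl⟩, tauT L, ?_⟩
    rw [tau_disc hL]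
    rcases neg_one_pow_eq_or ℤ L.length with h | h <;> simp only [h] <;> [left; right] <;> ring
end

section
/- A Z-reduced form g lies in μ(G⁺) if and only if its bead sequence β(g) begins with the quotient 1, and g lies in μ(G⁻) if and only if β(g) ends with the quotient 1; that is, μ(G⁺) = β⁻¹(η⁺(S₁)) and μ(G⁻) = β⁻¹(η⁻(S₁)). -/
section Continuant

open Matrix

theorem cont_pos : ∀ {L : List ℤ}, (∀ x ∈ L, 0 < x) → 0 < cont L
  | [], _ => Int.one_pos
  | [q], h => h q (by simp)
  | q :: r :: t, h => by
    have hq := h q (by simp)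
    have hrt := cont_pos fun x hx => h x (List.mem_cons_of_mem q hx)
    have ht := cont_pos fun x hx => h x (.tail q (.tail r hx))
    simp only [cont]
    positivity

theorem cont_tail_le {L : List ℤ} (h : ∀ x ∈ L, 0 < x) : cont L.tail ≤ cont L := by
  match L with
  | [] => exact le_rfl
  | [q] => exact h q (by simp)
  | q :: r :: t =>
    have hq := h q (by simp)
    have hrt := cont_pos fun x hx => h x (List.mem_cons_of_mem q hx)
    have ht := cont_pos fun x hx => h x (.tail q (.tail r hx))
    simp only [cont, List.tail_cons]
    nlinarith

theorem cont_cons_of_ne_nil (q : ℤ) {L : List ℤ} (hL : L ≠ []) :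
    cont (q :: L) = q * cont L + cont L.tail := by
  obtain ⟨r, t, rfl⟩ := List.exists_cons_of_ne_nil hL
  rfl

def cfMat (L : List ℤ) : Matrix (Fin 2) (Fin 2) ℤ := (L.map fun q => !![q, 1; 1, 0]).prod

theorem cfMat_cons (q : ℤ) (L : List ℤ) : cfMat (q :: L) = !![q, 1; 1, 0] * cfMat L := by
  simp [cfMat]

theorem cfMat_append (L M : List ℤ) : cfMat (L ++ M) = cfMat L * cfMat M := by
  simp [cfMat]

theorem cfMat_reverse (L : List ℤ) : cfMat L.reverse = (cfMat L)ᵀ := by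
  induction L with
  | nil => simp [cfMat]
  | cons q L ih =>
    have hq : (!![q, 1; 1, 0] : Matrix (Fin 2) (Fin 2) ℤ)ᵀ = !![q, 1; 1, 0] := by
      ext i j; fin_cases i <;> fin_cases j <;> rfl
    rw [List.reverse_cons, cfMat_append, ih, cfMat_cons q L, transpose_mul, hq]
    simp [cfMat]

theorem det_cfMat (L : List ℤ) : (cfMat L).det = (-1) ^ L.length := by
  induction L with
  | nil => simp [cfMat]
  | cons q L ih => rw [cfMat_cons, det_mul, ih, det_fin_two_of, List.length_cons]; ring

theorem cfMat_cons_zero_zero (q : ℤ) (L : List ℤ) :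
    cfMat (q :: L) 0 0 = q * cfMat L 0 0 + cfMat L 1 0 := by
  simp [cfMat_cons, mul_apply, Fin.sum_univ_two]

theorem cfMat_cons_one_zero (q : ℤ) (L : List ℤ) : cfMat (q :: L) 1 0 = cfMat L 0 0 := by
  simp [cfMat_cons, mul_apply, Fin.sum_univ_two]

theorem cfMat_zero_zero : ∀ L : List ℤ, cfMat L 0 0 = cont L
  | [] => rfl
  | [q] => by simp [cfMat, cont]
  | q :: r :: t => by
    rw [cfMat_cons_zero_zero, cfMat_cons_one_zero, cfMat_zero_zero, cfMat_zero_zero]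
    rfl

theorem cfMat_one_zero {L : List ℤ} (hL : L ≠ []) : cfMat L 1 0 = cont L.tail := by
  obtain ⟨q, L, rfl⟩ := List.exists_cons_of_ne_nil hL
  rw [cfMat_cons_one_zero, cfMat_zero_zero, List.tail_cons]

theorem cfMat_zero_one {L : List ℤ} (hL : L ≠ []) : cfMat L 0 1 = cont L.dropLast := by
  rw [← List.dropLast_append_getLast hL, cfMat_append, List.dropLast_concat, mul_apply,
    Fin.sum_univ_two, ← cfMat_zero_zero]
  simp [cfMat]

theorem cont_reverse (L : List ℤ) : cont L.reverse = cont L := by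
  rw [← cfMat_zero_zero, cfMat_reverse, transpose_apply, cfMat_zero_zero]

theorem cont_tail_reverse {L : List ℤ} (hL : L ≠ []) :
    cont L.reverse.tail = cont L.dropLast := by
  rw [← cfMat_one_zero (List.reverse_ne_nil_iff.2 hL), cfMat_reverse, transpose_apply,
    cfMat_zero_one hL]

theorem cont_dropLast_le_s12 {L : List ℤ} (h : ∀ x ∈ L, 0 < x) : cont L.dropLast ≤ cont L := by
  rcases eq_or_ne L [] with rfl | hL
  · exact le_rfl
  · rw [← cont_tail_reverse hL, ← cont_reverse L]
    exact cont_tail_le fun x hx => h x (List.mem_reverse.1 hx)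

theorem exists_cont_mul_sub_eq {L : List ℤ} (hL : L ≠ []) :
    ∃ X, cont L * X - cont L.dropLast * cont L.tail = (-1) ^ L.length := by
  refine ⟨cfMat L 1 1, ?_⟩
  rw [← det_cfMat, det_fin_two, cfMat_zero_zero, cfMat_zero_one hL, cfMat_one_zero hL]

theorem isCoprime_cont_cont_tail {L : List ℤ} (hL : L ≠ []) :
    IsCoprime (cont L) (cont L.tail) := by
  obtain ⟨X, hX⟩ := exists_cont_mul_sub_eq hL
  have hsq : ((-1 : ℤ) ^ L.length) * (-1) ^ L.length = 1 := by rw [← mul_pow]; norm_num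
  exact ⟨(-1) ^ L.length * X, -((-1) ^ L.length * cont L.dropLast), by
    linear_combination (-1) ^ L.length * hX + hsq⟩

end Continuant

section ContinuedFraction

variable {L : List ℤ}

theorem isCF_div_iff {p q : ℤ} (hq : q ≠ 0) :
    IsCF (p / q) L ↔ L ≠ [] ∧ (∀ x ∈ L, 0 < x) ∧ q * cont L = p * cont L.tail := by
  have hq' : (q : ℚ) ≠ 0 := Int.cast_ne_zero.2 hq
  unfold IsCF
  rw [div_mul_eq_mul_div, eq_div_iff hq', ← Int.cast_mul, ← Int.cast_mul, Int.cast_inj,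
    mul_comm]

theorem IsCF.exists_eq_mul {p q : ℤ} (hq : q ≠ 0) (h : IsCF (p / q) L) :
    ∃ k, p = k * cont L ∧ q = k * cont L.tail := by
  obtain ⟨hL, hpos, hval⟩ := (isCF_div_iff hq).1 h
  obtain ⟨k, hk⟩ : cont L ∣ p := (isCoprime_cont_cont_tail hL).dvd_of_dvd_mul_left
    ⟨q, by linear_combination -hval⟩
  exact ⟨k, by linarith, mul_left_cancel₀ (cont_pos hpos).ne'
    (by linear_combination hval + cont L.tail * hk)⟩

theorem IsCF.cons {q m r : ℤ} (hm : 0 < m) (hq : 0 < q) (hr : 0 < r) (h : IsCF (q / r) L) :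
    IsCF (((m * q + r : ℤ) : ℚ) / q) (m :: L) := by
  obtain ⟨hL, hpos, hval⟩ := (isCF_div_iff hr.ne').1 h
  refine (isCF_div_iff hq.ne').2 ⟨List.cons_ne_nil m L, ?_, ?_⟩
  · rintro x (_ | ⟨_, hx⟩)
    exacts [hm, hpos x hx]
  · rw [cont_cons_of_ne_nil m hL, List.tail_cons]
    linear_combination -hval

theorem exists_isCF_div {p q s : ℤ} (hs : s = 1 ∨ s = -1) (hq : 0 < q) (hqp : q < p) :
    ∃ L, IsCF (p / q) L ∧ (-1) ^ L.length = s := by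
  have hdiv : p / q * q + p % q = p := Int.ediv_mul_add_emod p q
  have hr : 0 ≤ p % q := Int.emod_nonneg p hq.ne'
  have hrq : p % q < q := Int.emod_lt_of_pos p hq
  have hm : 0 < p / q := by
    by_contra h
    nlinarith
  rcases hr.eq_or_lt with hr0 | hr0
  · rw [← hr0, add_zero] at hdiv
    have hm2 : 2 ≤ p / q := by nlinarith
    rcases hs with rfl | rfl
    · refine ⟨[p / q - 1, 1], (isCF_div_iff hq.ne').2 ⟨by simp, ?_, ?_⟩, by norm_num⟩
      · simp only [List.mem_cons, List.not_mem_nil, or_false]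
        omega
      · simp only [cont, List.tail_cons]
        linarith
    · refine ⟨[p / q], (isCF_div_iff hq.ne').2 ⟨by simp, by simpa using hm, ?_⟩,
        by norm_num⟩
      simp only [cont, List.tail_cons]
      linarith
  · obtain ⟨L, hL, hpar⟩ := exists_isCF_div (p := q) (q := p % q) (s := -s) (by omega) hr0 hrq
    refine ⟨p / q :: L, ?_, by rw [List.length_cons, pow_succ, hpar]; ring⟩
    simpa only [hdiv] using hL.cons hm hq hr0
termination_by q.toNat

theorem exists_isCF_div_head_eq_one {p q s : ℤ} (hs : s = 1 ∨ s = -1) (hq : 0 < q) (hqp : q < p)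
    (hp : p < 2 * q) : ∃ L, IsCF (p / q) L ∧ L.head? = some 1 ∧ (-1) ^ L.length = s := by
  obtain ⟨L, hL, hpar⟩ := exists_isCF_div (p := q) (q := p - q) (s := -s) (by omega)
    (by omega) (by omega)
  refine ⟨1 :: L, ?_, rfl, by rw [List.length_cons, pow_succ, hpar]; ring⟩
  simpa using hL.cons one_pos (by omega) (by omega)

theorem eq_singleton_one_of_cont_tail_eq {L : List ℤ} (hL : L ≠ []) (hpos : ∀ x ∈ L, 0 < x)
    (h : cont L.tail = cont L) : L = [1] := by
  match L with
  | [q] =>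
    simp only [cont, List.tail_cons] at h
    rw [← h]
  | q :: r :: t =>
    have hq := hpos q (by simp)
    have hrt := cont_pos fun x hx => hpos x (.tail q hx)
    have ht := cont_pos fun x hx => hpos x (.tail q (.tail r hx))
    simp only [cont, List.tail_cons] at h
    nlinarith

theorem IsCF.le_two_mul_of_head?_eq_one {p q : ℤ} (hq : 0 < q) (h : IsCF (p / q) L)
    (h1 : L.head? = some 1) : p ≤ 2 * q ∧ (p = 2 * q → L = [1, 1]) := by
  obtain ⟨hL, hpos, hval⟩ := (isCF_div_iff hq.ne').1 h
  obtain ⟨T, rfl⟩ : ∃ T, L = 1 :: T := by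
    obtain ⟨x, T, rfl⟩ := List.exists_cons_of_ne_nil hL
    exact ⟨T, by simpa using h1⟩
  rcases eq_or_ne T [] with rfl | hT
  · simp only [cont, List.tail_cons] at hval
    omega
  have hposT : ∀ x ∈ T, 0 < x := fun x hx => hpos x (.tail 1 hx)
  have hTpos := cont_pos hposT
  have hTle := cont_tail_le hposT
  rw [cont_cons_of_ne_nil 1 hT, List.tail_cons] at hval
  refine ⟨by nlinarith, fun hp => ?_⟩
  subst hp
  rw [eq_singleton_one_of_cont_tail_eq hT hposT (by nlinarith)]

end ContinuedFraction

theorem neg_neg_one_pow_eq_or (n : ℕ) : -(-1 : ℤ) ^ n = 1 ∨ -(-1 : ℤ) ^ n = -1 := by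
  rcases neg_one_pow_eq_or ℤ n with h | h <;> simp [h]

theorem exists_isFundSol {Δ : ℤ} (h0 : 0 < Δ) (hΔ : ¬ IsSquare Δ) :
    ∃ t u, IsFundSol Δ t u := by
  classical
  obtain ⟨x, y, hxy, hy⟩ := Pell.exists_of_not_isSquare h0 hΔ
  have hx : x ≠ 0 := by
    rintro rfl
    nlinarith [sq_nonneg y]
  have hP : ∃ n : ℕ, 0 < n ∧ ∃ t : ℤ, 0 < t ∧ |t ^ 2 - Δ * n ^ 2| = 4 := by
    refine ⟨2 * y.natAbs, by positivity, 2 * |x|, by positivity, ?_⟩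
    push_cast
    rw [mul_pow, mul_pow, sq_abs, sq_abs,
      show 2 ^ 2 * x ^ 2 - Δ * (2 ^ 2 * y ^ 2) = 4 by linear_combination 4 * hxy]
    rfl
  obtain ⟨hn, t, ht, htn⟩ := Nat.find_spec hP
  refine ⟨t, Nat.find hP, ht, by exact_mod_cast hn, htn, fun t' u' ht' hu' h => ?_⟩
  have := Nat.find_min' hP (m := u'.toNat)
    ⟨by omega, t', ht', by rwa [Int.toNat_of_nonneg hu'.le]⟩
  omega

namespace QF

theorem disc_rev (g : QF) : g.rev.disc = g.disc := by
  simp only [disc, rev]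
  ring

theorem exists_two_mul_eq_add {g : QF} {t u : ℤ} (habs : |t ^ 2 - g.disc * u ^ 2| = 4) :
    ∃ z, 2 * z = t + g.b * u := by
  obtain ⟨k, hk⟩ : 2 ∣ t ^ 2 - g.disc * u ^ 2 := by
    rcases (abs_eq (by norm_num : (0 : ℤ) ≤ 4)).1 habs with h | h <;> rw [h] <;> norm_num
  have hsq : Even ((t + g.b * u) ^ 2) :=
    ⟨k + g.b ^ 2 * u ^ 2 - 2 * g.a * g.c * u ^ 2 + t * g.b * u, by
      simp only [disc] at hk
      linear_combination hk⟩
  obtain ⟨z, hz⟩ := (Int.even_pow.1 hsq).1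
  exact ⟨z, by omega⟩

theorem isBeta_iff {g : QF} {L : List ℤ} :
    g.IsBeta L ↔ ∃ t u z, IsFundSol g.disc t u ∧ 2 * z = t + g.b * u ∧
      IsCF (z / (z - g.a * u : ℤ)) L ∧ t ^ 2 - g.disc * u ^ 2 = 4 * -(-1) ^ L.length := by
  have hx : ∀ t u z : ℤ, 2 * z = t + g.b * u →
      ((t + g.b * u : ℤ) : ℚ) / 2 / (((t + g.b * u : ℤ) : ℚ) / 2 - ((g.a * u : ℤ) : ℚ))
        = z / (z - g.a * u : ℤ) := by
    intro t u z hz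
    rw [← hz]
    push_cast
    ring
  constructor
  · rintro ⟨t, u, hfund, hcf, hev, hod⟩
    have hpell := (abs_eq (by norm_num : (0 : ℤ) ≤ 4)).1 hfund.2.2.1
    obtain ⟨z, hz⟩ := exists_two_mul_eq_add hfund.2.2.1
    refine ⟨t, u, z, hfund, hz, hx t u z hz ▸ hcf, ?_⟩
    rcases hpell with h | h
    · rw [(hod h).neg_one_pow, h]; norm_num
    · rw [(hev h).neg_one_pow, h]; norm_num
  · rintro ⟨t, u, z, hfund, hz, hcf, hpar⟩
    refine ⟨t, u, hfund, (hx t u z hz).symm ▸ hcf, fun h => ?_, fun h => ?_⟩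
    · exact (neg_one_pow_eq_one_iff_even (R := ℤ) (by norm_num)).1 (by linarith)
    · rcases Nat.even_or_odd L.length with hL | hL
      · rw [hL.neg_one_pow] at hpar
        linarith
      · exact hL

theorem rev_rev (g : QF) : g.rev.rev = g := rfl

theorem IsZReduced.rev {g : QF} (hg : g.IsZReduced) : g.rev.IsZReduced := by
  obtain ⟨⟨h0, hsq⟩, ha, hb, hc, habc⟩ := hg
  exact ⟨⟨by rwa [disc_rev], by rwa [disc_rev]⟩, hc, hb, ha,
    show g.c + g.a < g.b by linarith⟩

theorem IsIndefinite.four_mul_add_ne {g : QF} (hg : g.IsIndefinite) :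
    4 * g.a + g.c ≠ 2 * g.b := by
  intro h
  refine hg.2 ⟨g.b - 4 * g.a, ?_⟩
  simp only [disc]
  linear_combination (-4 * g.a) * h

section PellSolution

variable {g : QF} {t u z e : ℤ}

theorem sq_sub_mul_add_eq_of_pell (hpell : t ^ 2 - g.disc * u ^ 2 = 4 * e)
    (hz : 2 * z = t + g.b * u) : z ^ 2 - g.b * u * z + g.a * g.c * u ^ 2 = e := by
  have h4 : 4 * (z ^ 2 - g.b * u * z + g.a * g.c * u ^ 2) = 4 * e := by
    simp only [disc] at hpell
    linear_combination hpell + (2 * z - g.b * u + t) * hz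
  omega

theorem IsZReduced.a_mul_lt (hg : g.IsZReduced) (ht : 0 < t) (hu : 0 < u) (he : -1 ≤ e)
    (hpell : t ^ 2 - g.disc * u ^ 2 = 4 * e) (hz : 2 * z = t + g.b * u) : g.a * u < z := by
  obtain ⟨-, ha, -, hc, habc⟩ := hg
  have hq := sq_sub_mul_add_eq_of_pell hpell hz
  have hz2 : 2 ≤ z := by nlinarith
  have hbac : 2 ≤ (g.b - g.a - g.c) * u * z := by
    have : 1 ≤ (g.b - g.a - g.c) * u := by nlinarith
    nlinarith
  -- the product of `z - au` and `z - cu` is `e + (b - a - c)uz > 0` and their sum is positive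
  have hprod : 0 < (z - g.a * u) * (z - g.c * u) := by nlinarith
  have hsum : 0 < (z - g.a * u) + (z - g.c * u) := by nlinarith
  by_contra h
  nlinarith

theorem IsZReduced.c_mul_lt (hg : g.IsZReduced) (ht : 0 < t) (hu : 0 < u) (he : -1 ≤ e)
    (hpell : t ^ 2 - g.disc * u ^ 2 = 4 * e) (hz : 2 * z = t + g.b * u) : g.c * u < z :=
  hg.rev.a_mul_lt ht hu he (by rwa [disc_rev]) hz

theorem mul_sub_eq_of_pell (hpell : t ^ 2 - g.disc * u ^ 2 = 4 * e) (hz : 2 * z = t + g.b * u) :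
    (2 * g.a * u - z) * (2 * g.a * u - (g.b * u - z)) =
      g.a * (4 * g.a - 2 * g.b + g.c) * u ^ 2 - e := by
  linear_combination -sq_sub_mul_add_eq_of_pell hpell hz

theorem IsZReduced.two_mul_le_of_lt (hg : g.IsZReduced) (ht : 0 < t) (hu : 0 < u)
    (he : e = 1 ∨ e = -1) (hpell : t ^ 2 - g.disc * u ^ 2 = 4 * e) (hz : 2 * z = t + g.b * u)
    (h : 4 * g.a + g.c < 2 * g.b) : 2 * g.a * u ≤ z ∧ (z = 2 * g.a * u → e = -1) := by
  have hP := mul_sub_eq_of_pell hpell hz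
  have hneg : g.a * (4 * g.a - 2 * g.b + g.c) * u ^ 2 ≤ -1 := by
    have := hg.2.1
    have : g.a * (4 * g.a - 2 * g.b + g.c) ≤ -1 := by nlinarith
    nlinarith
  refine ⟨?_, fun hz' => ?_⟩
  · by_contra hlt
    have : 0 < (2 * g.a * u - z) * (2 * g.a * u - (g.b * u - z)) := by
      apply mul_pos <;> linarith
    rcases he with rfl | rfl <;> linarith
  · rw [hz', sub_self, zero_mul] at hP
    rcases he with rfl | rfl <;> linarith

theorem IsZReduced.le_two_mul_of_lt (hg : g.IsZReduced) (ht : 0 < t) (hu : 0 < u)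
    (he : e = 1 ∨ e = -1) (hpell : t ^ 2 - g.disc * u ^ 2 = 4 * e) (hz : 2 * z = t + g.b * u)
    (h : 2 * g.b < 4 * g.a + g.c) : z ≤ 2 * g.a * u ∧ (z = 2 * g.a * u → e = 1) := by
  have hP := mul_sub_eq_of_pell hpell hz
  have hza := hg.a_mul_lt ht hu (by omega) hpell hz
  obtain ⟨-, ha, -, -, habc⟩ := hg
  have hpos : 1 ≤ g.a * (4 * g.a - 2 * g.b + g.c) * u ^ 2 := by
    have : 1 ≤ g.a * (4 * g.a - 2 * g.b + g.c) := by nlinarith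
    nlinarith
  refine ⟨?_, fun hz' => ?_⟩
  · by_contra hlt
    -- `b < 3a`, so `bu - z < (b - a)u < 2au`
    have : 0 < 2 * g.a * u - (g.b * u - z) := by nlinarith
    have : (2 * g.a * u - z) * (2 * g.a * u - (g.b * u - z)) < 0 :=
      mul_neg_of_neg_of_pos (by linarith) this
    rcases he with rfl | rfl <;> linarith
  · rw [hz', sub_self, zero_mul] at hP
    rcases he with rfl | rfl <;> linarith

theorem IsZReduced.cont_eq_of_isCF {L : List ℤ} (hg : g.IsZReduced) (ht : 0 < t) (hu : 0 < u)
    (he : e = 1 ∨ e = -1) (hpell : t ^ 2 - g.disc * u ^ 2 = 4 * e) (hz : 2 * z = t + g.b * u)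
    (hL : IsCF (z / (z - g.a * u : ℤ)) L) (hpar : (-1) ^ L.length = -e) :
    cont L = z ∧ cont L.dropLast = z - g.c * u := by
  have hza := hg.a_mul_lt ht hu (by omega) hpell hz
  have hzc := hg.c_mul_lt ht hu (by omega) hpell hz
  have hq := sq_sub_mul_add_eq_of_pell hpell hz
  have hcu : 0 < g.c * u := mul_pos hg.2.2.2.1 hu
  obtain ⟨hne, hpos, -⟩ := (isCF_div_iff (by omega)).1 hL
  have hP := cont_pos hpos
  obtain ⟨k, hk, hk'⟩ := hL.exists_eq_mul (by omega)
  have hkey : k * (cont L.tail * (z - g.c * u) - (g.b - g.a - g.c) * u * cont L) = e := by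
    linear_combination hq - (z - g.c * u) * hk' + (g.b - g.a - g.c) * u * hk
  -- `z / (z - au)` is in lowest terms: a common factor `k` divides `e = ±1`
  have hk1 : k = 1 := by
    have hk0 : 0 < k := pos_of_mul_pos_left (hk ▸ (by omega : 0 < z)) hP.le
    refine Int.eq_one_of_dvd_one hk0.le ?_
    rcases he with rfl | rfl
    exacts [⟨_, hkey.symm⟩, dvd_neg.1 ⟨_, hkey.symm⟩]
  subst hk1
  obtain ⟨X, hX⟩ := exists_cont_mul_sub_eq hne
  -- `z - cu` and `cont L.dropLast` both complete the column `(z, z - au)` to a determinant `-e`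
  have hdvd : cont L ∣ z - g.c * u - cont L.dropLast :=
    (isCoprime_cont_cont_tail hne).dvd_of_dvd_mul_left
      ⟨(g.b - g.a - g.c) * u - X, by linear_combination hkey + hX + hpar⟩
  have hD := cont_pos fun x hx => hpos x (List.dropLast_subset L hx)
  have hDle := cont_dropLast_le_s12 hpos
  refine ⟨by linarith, ?_⟩
  have := Int.eq_zero_of_abs_lt_dvd hdvd (abs_lt.2 ⟨by linarith, by linarith⟩)
  linarith

end PellSolution

theorem exists_isBeta_head?_eq_one_iff {g : QF} (hg : g.IsZReduced) :
    (∃ L, g.IsBeta L ∧ L.head? = some 1) ↔ 4 * g.a + g.c < 2 * g.b := by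
  constructor
  · rintro ⟨L, hL, h1⟩
    obtain ⟨t, u, z, ⟨ht, hu, -⟩, hz, hcf, hpell⟩ := isBeta_iff.1 hL
    have he := neg_neg_one_pow_eq_or L.length
    have hza := hg.a_mul_lt ht hu (by omega) hpell hz
    obtain ⟨h2, hL11⟩ := hcf.le_two_mul_of_head?_eq_one (by omega) h1
    by_contra hlt
    obtain ⟨hle, heq⟩ := hg.le_two_mul_of_lt ht hu he hpell hz
      (lt_of_le_of_ne (not_lt.1 hlt) hg.1.four_mul_add_ne.symm)
    -- then `z = 2au`, so `β(g) = (1, 1)` has even length although `e = 1`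
    have hz2 : z = 2 * g.a * u := by linarith
    have := heq hz2
    rw [hL11 (by linarith)] at this
    norm_num at this
  · intro h
    obtain ⟨t, u, hfund⟩ := exists_isFundSol hg.1.1 hg.1.2
    have ⟨ht, hu, habs, _⟩ := hfund
    obtain ⟨e, he, hpell⟩ : ∃ e, (e = 1 ∨ e = -1) ∧ t ^ 2 - g.disc * u ^ 2 = 4 * e := by
      rcases (abs_eq (by norm_num : (0 : ℤ) ≤ 4)).1 habs with h | h
      exacts [⟨1, .inl rfl, by linarith⟩, ⟨-1, .inr rfl, by linarith⟩]
    obtain ⟨z, hz⟩ := exists_two_mul_eq_add habs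
    have hza := hg.a_mul_lt ht hu (by omega) hpell hz
    have hau : 0 < g.a * u := mul_pos hg.2.1 hu
    obtain ⟨hle, heq⟩ := hg.two_mul_le_of_lt ht hu he hpell hz h
    obtain ⟨L, hcf, h1, hpar⟩ : ∃ L, IsCF (z / (z - g.a * u : ℤ)) L ∧ L.head? = some 1 ∧
        (-1) ^ L.length = -e := by
      rcases hle.eq_or_lt with hz2 | hz2
      · refine ⟨[1, 1], (isCF_div_iff (by omega)).2 ⟨by simp, by simp, ?_⟩, rfl, ?_⟩
        · simp only [cont, List.tail_cons]
          linarith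
        · rw [heq hz2.symm]
          norm_num
      · exact exists_isCF_div_head_eq_one (by omega) (by omega) (by omega) (by linarith)
    exact ⟨L, isBeta_iff.2 ⟨t, u, z, hfund, hz, hcf, by rw [hpell, hpar, neg_neg]⟩, h1⟩

theorem IsBeta.reverse {g : QF} {L : List ℤ} (hg : g.IsZReduced) (h : g.IsBeta L) :
    g.rev.IsBeta L.reverse := by
  obtain ⟨t, u, z, hfund, hz, hcf, hpell⟩ := isBeta_iff.1 h
  have he := neg_neg_one_pow_eq_or L.length
  have hza := hg.a_mul_lt hfund.1 hfund.2.1 (by omega) hpell hz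
  have hzc := hg.c_mul_lt hfund.1 hfund.2.1 (by omega) hpell hz
  obtain ⟨hP, hD⟩ := hg.cont_eq_of_isCF hfund.1 hfund.2.1 he hpell hz hcf (neg_neg _).symm
  obtain ⟨hne, hpos, -⟩ := (isCF_div_iff (by omega)).1 hcf
  refine isBeta_iff.2 ⟨t, u, z, by rwa [disc_rev], hz, (isCF_div_iff (sub_pos.2 hzc).ne').2
    ⟨List.reverse_ne_nil_iff.2 hne, by simpa using hpos, ?_⟩,
    by rwa [disc_rev, List.length_reverse]⟩
  rw [cont_reverse, cont_tail_reverse hne, hP, hD]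
  ring

end QF

section GaussReduced

variable {f : QF}

theorem QF.IsGReduced.rev (hf : f.IsGReduced) : f.rev.IsGReduced := by
  obtain ⟨⟨h0, hsq⟩, hac, habs⟩ := hf
  exact ⟨⟨by rwa [QF.disc_rev], by rwa [QF.disc_rev]⟩, by simpa [QF.rev, mul_comm] using hac,
    by simpa [QF.rev, add_comm] using habs⟩

theorem mu_rev (hf : f.a * f.c < 0) : mu f.rev = (mu f).rev := by
  rcases lt_or_gt_of_ne (show f.a ≠ 0 by rintro h; simp [h] at hf) with ha | ha
  · have hc : 0 < f.c := by nlinarith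
    simp only [mu, QF.rev, hc, ha.not_gt, if_true, if_false, QF.mk.injEq, true_and]
    constructor <;> ring
  · have hc : f.c < 0 := by nlinarith
    simp only [mu, QF.rev, ha, hc.not_gt, if_true, if_false, QF.mk.injEq, and_true]
    constructor <;> ring

theorem exists_isGMinus_mu_eq_iff (g : QF) :
    (∃ f : QF, f.IsGMinus ∧ mu f = g) ↔ ∃ f : QF, f.IsGPlus ∧ mu f = g.rev := by
  constructor
  · rintro ⟨f, ⟨hf, ha⟩, rfl⟩
    exact ⟨f.rev, ⟨hf.rev, show 0 < f.c by nlinarith [hf.2.1]⟩, mu_rev hf.2.1⟩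
  · rintro ⟨f, ⟨hf, ha⟩, hfg⟩
    refine ⟨f.rev, ⟨hf.rev, show f.c < 0 by nlinarith [hf.2.1]⟩, ?_⟩
    rw [mu_rev hf.2.1, hfg, QF.rev_rev]

theorem QF.IsZReduced.exists_isGPlus_mu_eq_iff {g : QF} (hg : g.IsZReduced) :
    (∃ f : QF, f.IsGPlus ∧ mu f = g) ↔ 4 * g.a + g.c < 2 * g.b := by
  obtain ⟨hind, ha, -, hc, habc⟩ := hg
  constructor
  · rintro ⟨f, ⟨⟨-, -, habs⟩, hfa⟩, rfl⟩
    simp only [mu, if_pos hfa]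
    linarith [le_abs_self (f.a + f.c)]
  · intro h
    refine ⟨⟨g.a, g.b - 2 * g.a, g.a - g.b + g.c⟩, ⟨⟨?_, ?_, ?_⟩, ha⟩, ?_⟩
    · have hd : QF.disc ⟨g.a, g.b - 2 * g.a, g.a - g.b + g.c⟩ = g.disc := by
        simp only [QF.disc]
        ring
      rwa [QF.IsIndefinite, hd]
    · exact mul_neg_of_pos_of_neg ha (by linarith)
    · exact abs_lt.2 ⟨by linarith, by linarith⟩
    · simp only [mu, if_pos ha]
      congr 1 <;> ring

end GaussReduced

/-- **Theorem.** A Z-reduced form `g` lies in `μ(G⁺)` iff `β(g)` begins with 1,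
and in `μ(G⁻)` iff `β(g)` ends with 1. -/
theorem stmt12 (g : QF) (hg : g.IsZReduced) :
    ((∃ f : QF, f.IsGPlus ∧ mu f = g) ↔
      ∃ L : List ℤ, g.IsBeta L ∧ L.head? = some 1) ∧
    ((∃ f : QF, f.IsGMinus ∧ mu f = g) ↔
      ∃ L : List ℤ, g.IsBeta L ∧ L.getLast? = some 1) := by
  refine ⟨hg.exists_isGPlus_mu_eq_iff.trans (QF.exists_isBeta_head?_eq_one_iff hg).symm, ?_⟩
  rw [exists_isGMinus_mu_eq_iff, hg.rev.exists_isGPlus_mu_eq_iff,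
    ← QF.exists_isBeta_head?_eq_one_iff hg.rev]
  constructor
  · rintro ⟨L, hL, h1⟩
    exact ⟨L.reverse, QF.rev_rev g ▸ hL.reverse hg.rev, by simpa using h1⟩
  · rintro ⟨L, hL, h1⟩
    exact ⟨L.reverse, hL.reverse hg, by simpa using h1⟩
end
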